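/- Let E = ℂ/Λ be a complex elliptic curve and α, β, γ, δ ∈ E four mutually distinct points. Define h_{α,β,γ,δ}(z) = [℘(z-α), ℘(z-β), ℘(z-γ), ℘(z-δ)] (the cross ratio). Then h_{α,β,γ,δ} is invariant under translation by every element of the 2-torsion subgroup E[2]: h_{α,β,γ,δ}(z + t) = h_{α,β,γ,δ}(z) for all t ∈ E[2]. -/

import Mathlib

open Filter Topology

/-- The lattice `⟨1, τ⟩ ⊆ ℂ`. -/
noncomputable def lat (τ : ℂ) : AddSubgroup ℂ := AddSubgroup.closure {1, τ}

/-- `IsWeierstrassP τ ℘` says that `℘` is the Weierstrass `℘`-function of the lattice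
`⟨1,τ⟩` (with junk values at lattice points): it is `⟨1,τ⟩`-periodic, even, analytic off
the lattice, and satisfies `℘(z) = z⁻² + o(z)` near `0`.  These conditions determine `℘`
uniquely off the lattice. -/
structure IsWeierstrassP (τ : ℂ) (℘ : ℂ → ℂ) : Prop where
  periodic : ∀ w ∈ lat τ, ∀ z, ℘ (z + w) = ℘ z
  even : ∀ z, ℘ (-z) = ℘ z
  analytic : AnalyticOnNhd ℂ ℘ {z | z ∉ lat τ}
  pole : Tendsto (fun z : ℂ => (℘ z - (z ^ 2)⁻¹) / z) (𝓝[≠] 0) (𝓝 0)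

/-!
For a half period `t ∉ Λ`, the function `F u = (℘ u - ℘ t) (℘ (u + t) - ℘ t)` is elliptic with
respect to `Λ` and `t`. Because `2 t ∈ Λ`, the second factor is even around `u = 0` and so has a
double zero there, which cancels the double pole of `℘ u`; hence the singularities of `F` on
`Λ ∪ (t + Λ)` are removable, `F` extends to a bounded entire function and is constant by
Liouville. So `℘ (z + t - x) - ℘ t = k / (℘ (z - x) - ℘ t)` with the same `k` for all four points
`x`, and cross ratios are invariant under translations and under the Möbius map `p ↦ k / p`.
-/

noncomputable def PeriodPair.ofUpperHalfPlane (τ : ℂ) (hτ : 0 < τ.im) : PeriodPair where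
  ω₁ := 1
  ω₂ := τ
  indep := by
    refine LinearIndependent.pair_iff.2 fun a b hab => ?_
    have hb : b * τ.im = 0 := by simpa using congr_arg Complex.im hab
    obtain rfl : b = 0 := (mul_eq_zero.1 hb).resolve_right hτ.ne'
    simpa using hab

lemma PeriodPair.mem_lattice_ofUpperHalfPlane {τ : ℂ} (hτ : 0 < τ.im) {w : ℂ} :
    w ∈ (PeriodPair.ofUpperHalfPlane τ hτ).lattice ↔ w ∈ lat τ := by
  rw [lat, ← Submodule.span_int_eq_addSubgroupClosure]
  rfl

namespace PeriodPair

variable (L : PeriodPair)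

lemma eventually_sub_notMem_lattice (z c : ℂ) : ∀ᶠ w in 𝓝[≠] z, w - c ∉ L.lattice := by
  have hnhds : ∀ᶠ w in 𝓝 z, w - c ∉ (L.lattice : Set ℂ) \ {z - c} :=
    ((continuous_sub_right c).tendsto z).eventually (L.compl_lattice_sdiff_singleton_mem_nhds _)
  filter_upwards [nhdsWithin_le_nhds hnhds, self_mem_nhdsWithin] with w hw hwz hmem
  exact hw ⟨hmem, fun h => hwz (sub_left_injective h)⟩

lemma apply_eq_apply_of_differentiable_of_periodic {f : ℂ → ℂ} (hf : Differentiable ℂ f)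
    (hper : ∀ z, ∀ w ∈ L.lattice, f (z + w) = f z) (z w : ℂ) : f z = f w :=
  hf.apply_eq_apply_of_bounded
    (IsZLattice.isCompact_range_of_periodic L.lattice f hf.continuous hper).isBounded z w

end PeriodPair

lemma eventually_not_mem_lat_or_sub_mem_lat {τ : ℂ} (hτ : 0 < τ.im) (t z : ℂ) :
    ∀ᶠ w in 𝓝[≠] z, ¬(w ∈ lat τ ∨ w - t ∈ lat τ) := by
  filter_upwards [(PeriodPair.ofUpperHalfPlane τ hτ).eventually_sub_notMem_lattice z 0,
    (PeriodPair.ofUpperHalfPlane τ hτ).eventually_sub_notMem_lattice z t] with w h₀ h₁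
  rw [sub_zero, PeriodPair.mem_lattice_ofUpperHalfPlane] at h₀
  rw [PeriodPair.mem_lattice_ofUpperHalfPlane] at h₁
  exact fun hw => hw.elim h₀ h₁

lemma AddSubgroup.add_mem_iff_sub_mem_of_add_self_mem {G : Type*} [AddCommGroup G]
    (H : AddSubgroup G) {t : G} (ht : t + t ∈ H) {u : G} : u + t ∈ H ↔ u - t ∈ H := by
  constructor <;> intro h
  · simpa [sub_add_eq_sub_sub] using sub_mem h ht
  · simpa [sub_add_eq_add_sub, add_sub_assoc] using add_mem h ht

namespace Complex

variable {E : Type*} [NormedAddCommGroup E] [NormedSpace ℂ E] [CompleteSpace E]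

theorem differentiable_piecewise_of_tendsto {S : Set ℂ} [DecidablePred (· ∈ S)] {F g : ℂ → E}
    (hS : ∀ z, ∀ᶠ w in 𝓝[≠] z, w ∉ S) (hF : ∀ z ∉ S, DifferentiableAt ℂ F z)
    (hg : ∀ p ∈ S, Tendsto F (𝓝[≠] p) (𝓝 (g p))) : Differentiable ℂ (S.piecewise g F) := by
  have hoff : ∀ z ∉ S, DifferentiableAt ℂ (S.piecewise g F) z := fun z hz =>
    (hF z hz).congr_of_eventuallyEq <| by
      filter_upwards [eventually_nhdsWithin_iff.1 (hS z)] with w hw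
      refine Set.piecewise_eq_of_notMem _ _ _ ?_
      rcases eq_or_ne w z with rfl | hwz
      exacts [hz, hw hwz]
  intro p
  by_cases hp : p ∈ S
  · refine (analyticAt_of_differentiable_on_punctured_nhds_of_continuousAt
      ((hS p).mono hoff) ?_).differentiableAt
    rw [← continuousWithinAt_compl_self, ContinuousWithinAt, Set.piecewise_eq_of_mem _ _ _ hp]
    refine (hg p hp).congr' ?_
    filter_upwards [hS p] with w hw using (Set.piecewise_eq_of_notMem _ _ _ hw).symm
  · exact hoff p hp

end Complex

lemma AnalyticAt.exists_tendsto_sub_div_sq_of_even {g : ℂ → ℂ} (hg : AnalyticAt ℂ g 0)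
    (heven : ∀ u, g (-u) = g u) :
    ∃ c, Tendsto (fun u => (g u - g 0) / u ^ 2) (𝓝[≠] 0) (𝓝 c) := by
  have hderiv : deriv g 0 = 0 := by
    have h := deriv_comp_neg (f := g) (x := 0)
    rw [funext heven, neg_zero] at h
    linear_combination h / 2
  obtain ⟨p, hp⟩ := hg
  have hg₁ : DifferentiableAt ℂ (dslope g 0) 0 :=
    hp.has_fpower_series_dslope_fslope.analyticAt.differentiableAt
  refine ⟨dslope (dslope g 0) 0 0, ?_⟩
  refine ((continuousAt_dslope_same.2 hg₁).tendsto.mono_left nhdsWithin_le_nhds).congr' ?_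
  filter_upwards [self_mem_nhdsWithin] with u (hu : u ≠ 0)
  have h₁ := sub_smul_dslope g 0 u
  have h₂ := sub_smul_dslope (dslope g 0) 0 u
  rw [sub_zero, smul_eq_mul] at h₁ h₂
  rw [dslope_same, hderiv, sub_zero] at h₂
  rw [← h₁, ← h₂]
  field_simp

lemma IsWeierstrassP.tendsto_sq_mul_sub {τ : ℂ} {℘ : ℂ → ℂ} (h℘ : IsWeierstrassP τ ℘) (e : ℂ) :
    Tendsto (fun u => u ^ 2 * (℘ u - e)) (𝓝[≠] 0) (𝓝 1) := by
  have hpoly : Tendsto (fun u : ℂ => (u ^ 3, 1 - e * u ^ 2)) (𝓝[≠] 0) (𝓝 (0, 1)) := by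
    refine Tendsto.mono_left ?_ nhdsWithin_le_nhds
    simpa using (show Continuous fun u : ℂ => (u ^ 3, 1 - e * u ^ 2) by fun_prop).tendsto 0
  have hlim := ((continuous_fst.tendsto _).comp hpoly).mul h℘.pole |>.add
    ((continuous_snd.tendsto _).comp hpoly)
  simp only [Function.comp_def, zero_mul, zero_add] at hlim
  refine hlim.congr' ?_
  filter_upwards [self_mem_nhdsWithin] with u (hu : u ≠ 0)
  field_simp
  ring

noncomputable def halfPeriodProduct (℘ : ℂ → ℂ) (t u : ℂ) : ℂ :=
  (℘ u - ℘ t) * (℘ (u + t) - ℘ t)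

namespace IsWeierstrassP

variable {τ : ℂ} {℘ : ℂ → ℂ} (h℘ : IsWeierstrassP τ ℘) {t : ℂ} (ht : t + t ∈ lat τ)
include h℘

lemma halfPeriodProduct_add_of_mem_lat (u : ℂ) {w : ℂ} (hw : w ∈ lat τ) :
    halfPeriodProduct ℘ t (u + w) = halfPeriodProduct ℘ t u := by
  simp only [halfPeriodProduct, h℘.periodic w hw, add_right_comm u w t]

include ht

lemma halfPeriodProduct_add_self (u : ℂ) :
    halfPeriodProduct ℘ t (u + t) = halfPeriodProduct ℘ t u := by
  simp only [halfPeriodProduct, add_assoc u t t, h℘.periodic _ ht, mul_comm]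

lemma apply_neg_add_eq_apply_add (u : ℂ) : ℘ (-u + t) = ℘ (u + t) := by
  rw [← h℘.even, neg_add, neg_neg, ← h℘.periodic _ ht]
  ring_nf

lemma exists_tendsto_halfPeriodProduct (htΛ : t ∉ lat τ) :
    ∃ c, Tendsto (halfPeriodProduct ℘ t) (𝓝[≠] 0) (𝓝 c) := by
  have hg : AnalyticAt ℂ (fun u => ℘ (u + t)) 0 :=
    AnalyticAt.comp (f := fun u => u + t) (h℘.analytic _ (by rwa [zero_add])) (by fun_prop)
  obtain ⟨c, hc⟩ := hg.exists_tendsto_sub_div_sq_of_even (h℘.apply_neg_add_eq_apply_add ht)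
  have hprod := (h℘.tendsto_sq_mul_sub (℘ t)).mul hc
  rw [one_mul] at hprod
  refine ⟨c, hprod.congr' ?_⟩
  filter_upwards [self_mem_nhdsWithin] with u (hu : u ≠ 0)
  simp only [halfPeriodProduct, zero_add]
  field_simp

lemma differentiableAt_halfPeriodProduct {u : ℂ} (hu : u ∉ lat τ) (hu' : u - t ∉ lat τ) :
    DifferentiableAt ℂ (halfPeriodProduct ℘ t) u := by
  have hshift : AnalyticAt ℂ (fun v => ℘ (v + t)) u :=
    AnalyticAt.comp (f := fun v => v + t)
      (h℘.analytic _ (((lat τ).add_mem_iff_sub_mem_of_add_self_mem ht).not.2 hu')) (by fun_prop)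
  exact ((h℘.analytic u hu).sub analyticAt_const |>.mul
    (hshift.sub analyticAt_const)).differentiableAt

lemma halfPeriodProduct_add_of_mem {w : ℂ} (hw : w ∈ lat τ ∨ w - t ∈ lat τ) (u : ℂ) :
    halfPeriodProduct ℘ t (u + w) = halfPeriodProduct ℘ t u := by
  rcases hw with hw | hw
  · exact h℘.halfPeriodProduct_add_of_mem_lat u hw
  · rw [show u + w = u + (w - t) + t by ring, h℘.halfPeriodProduct_add_self ht,
      h℘.halfPeriodProduct_add_of_mem_lat _ hw]

lemma tendsto_halfPeriodProduct_of_mem {c : ℂ}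
    (hc : Tendsto (halfPeriodProduct ℘ t) (𝓝[≠] 0) (𝓝 c)) {p : ℂ} (hp : p ∈ lat τ ∨ p - t ∈ lat τ) :
    Tendsto (halfPeriodProduct ℘ t) (𝓝[≠] p) (𝓝 c) := by
  have hsub : Tendsto (· - p) (𝓝[≠] p) (𝓝[≠] 0) := by
    simpa using (continuous_sub_right p).continuousWithinAt.tendsto_nhdsWithin
      (x := p) (s := {p}ᶜ) fun w hw => sub_ne_zero.2 hw
  refine (hc.comp hsub).congr fun w => ?_
  rw [Function.comp_apply, ← h℘.halfPeriodProduct_add_of_mem ht hp, sub_add_cancel]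

lemma halfPeriodProduct_eq (hτ : 0 < τ.im) (htΛ : t ∉ lat τ) {u v : ℂ}
    (hu : u ∉ lat τ) (hu' : u + t ∉ lat τ) (hv : v ∉ lat τ) (hv' : v + t ∉ lat τ) :
    halfPeriodProduct ℘ t u = halfPeriodProduct ℘ t v := by
  classical
  let S : Set ℂ := {w | w ∈ lat τ ∨ w - t ∈ lat τ}
  obtain ⟨c, hc⟩ := h℘.exists_tendsto_halfPeriodProduct ht htΛ
  let G := S.piecewise (fun _ => c) (halfPeriodProduct ℘ t)
  have hG : Differentiable ℂ G := Complex.differentiable_piecewise_of_tendsto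
    (eventually_not_mem_lat_or_sub_mem_lat hτ t)
    (fun u hu => h℘.differentiableAt_halfPeriodProduct ht (fun h => hu (.inl h))
      (fun h => hu (.inr h))) (fun p hp => h℘.tendsto_halfPeriodProduct_of_mem ht hc hp)
  have hGper : ∀ z, ∀ w ∈ (PeriodPair.ofUpperHalfPlane τ hτ).lattice, G (z + w) = G z := by
    intro z w hw
    rw [PeriodPair.mem_lattice_ofUpperHalfPlane] at hw
    have hzS : z + w ∈ S ↔ z ∈ S := by
      simp only [S, Set.mem_ofPred_eq, (lat τ).add_mem_cancel_right hw, add_sub_right_comm z w t]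
    by_cases hz : z ∈ S
    · simp [G, hz, hzS.2 hz]
    · simp [G, hz, hzS.not.2 hz, h℘.halfPeriodProduct_add_of_mem_lat z hw]
  have hGuv := (PeriodPair.ofUpperHalfPlane τ hτ).apply_eq_apply_of_differentiable_of_periodic
    hG hGper u v
  have hS : ∀ {x}, x ∉ lat τ → x + t ∉ lat τ → x ∉ S := fun hx hx' h =>
    h.elim hx (((lat τ).add_mem_iff_sub_mem_of_add_self_mem ht).not.1 hx')
  simpa only [G, Set.piecewise_eq_of_notMem _ _ _ (hS hu hu'),
    Set.piecewise_eq_of_notMem _ _ _ (hS hv hv')] using hGuv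

end IsWeierstrassP

/-- The cross ratio `[a,b,c,d] = ((a-c)(b-d))/((b-c)(a-d))` of four scalars. -/
noncomputable def crossRatio (a b c d : ℂ) : ℂ := (a - c) * (b - d) / ((b - c) * (a - d))

lemma crossRatio_sub_right (a b c d e : ℂ) :
    crossRatio (a - e) (b - e) (c - e) (d - e) = crossRatio a b c d := by
  simp only [crossRatio, sub_sub_sub_cancel_right]

lemma crossRatio_eq_of_mul_eq {pa pb pc pd qa qb qc qd k : ℂ}
    (ha : pa * qa = k) (hb : pb * qb = k) (hc : pc * qc = k) (hd : pd * qd = k)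
    (hp : (pb - pc) * (pa - pd) ≠ 0) (hq : (qb - qc) * (qa - qd) ≠ 0) :
    crossRatio qa qb qc qd = crossRatio pa pb pc pd := by
  rw [crossRatio, crossRatio, div_eq_div_iff hq hp]
  linear_combination
    (pb * (qc - qd) + pc * (qd - qb) + pd * (qb - qc)) * ha -
    (pa * (qc - qd) + pc * (qd - qa) + pd * (qa - qc)) * hb +
    (pa * (qb - qd) + pb * (qd - qa) + pd * (qa - qb)) * hc -
    (pa * (qb - qc) + pb * (qc - qa) + pc * (qa - qb)) * hd

/-- The function `h_{α,β,γ,δ}(z) = [℘(z-α), ℘(z-β), ℘(z-γ), ℘(z-δ)]`. -/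
noncomputable def hCross (℘ : ℂ → ℂ) (α β γ δ : ℂ) (z : ℂ) : ℂ :=
  crossRatio (℘ (z - α)) (℘ (z - β)) (℘ (z - γ)) (℘ (z - δ))

theorem hCross_two_torsion_invariant_general (τ : ℂ) (hτ : 0 < τ.im)
    (℘ : ℂ → ℂ) (h℘ : IsWeierstrassP τ ℘) (α β γ δ : ℂ)
    (t z : ℂ) (ht : t + t ∈ lat τ)
    (hz : ∀ x ∈ ({α, β, γ, δ} : Set ℂ), z - x ∉ lat τ ∧ z + t - x ∉ lat τ)
    (hden : (℘ (z - β) - ℘ (z - γ)) * (℘ (z - α) - ℘ (z - δ)) ≠ 0)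
    (hden' : (℘ (z + t - β) - ℘ (z + t - γ)) * (℘ (z + t - α) - ℘ (z + t - δ)) ≠ 0) :
    hCross ℘ α β γ δ (z + t) = hCross ℘ α β γ δ z := by
  by_cases htΛ : t ∈ lat τ
  · simp only [hCross, ← sub_add_eq_add_sub, h℘.periodic t htΛ]
  have hz' : ∀ x ∈ ({α, β, γ, δ} : Set ℂ), z - x ∉ lat τ ∧ z - x + t ∉ lat τ := by
    simpa only [sub_add_eq_add_sub] using hz
  have hprod : ∀ x ∈ ({α, β, γ, δ} : Set ℂ),
      (℘ (z - x) - ℘ t) * (℘ (z + t - x) - ℘ t) = halfPeriodProduct ℘ t (z - α) := by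
    intro x hx
    rw [← sub_add_eq_add_sub]
    exact h℘.halfPeriodProduct_eq ht hτ htΛ (hz' x hx).1 (hz' x hx).2
      (hz' α (by simp)).1 (hz' α (by simp)).2
  rw [hCross, hCross, ← crossRatio_sub_right _ _ _ _ (℘ t),
    ← crossRatio_sub_right (℘ (z - α)) _ _ _ (℘ t)]
  refine crossRatio_eq_of_mul_eq (hprod α (by simp)) (hprod β (by simp)) (hprod γ (by simp))
    (hprod δ (by simp)) ?_ ?_ <;> simpa only [sub_sub_sub_cancel_right]

/-- for four mutually distinct points `α, β, γ, δ` of `E = ℂ/⟨1,τ⟩`, the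
function `h_{α,β,γ,δ}` is invariant under translation by every `2`-torsion point `t` of
`E` (stated away from the poles of the four `℘`-factors and the zeros of the
denominators, where all values are genuine). -/
theorem hCross_two_torsion_invariant (τ : ℂ) (hτ : 0 < τ.im)
    (℘ : ℂ → ℂ) (h℘ : IsWeierstrassP τ ℘) (α β γ δ : ℂ)
    (hd : ∀ x ∈ ({α, β, γ, δ} : Set ℂ), ∀ y ∈ ({α, β, γ, δ} : Set ℂ),
      x ≠ y → (QuotientAddGroup.mk x : ℂ ⧸ lat τ) ≠ QuotientAddGroup.mk y)
    (t z : ℂ) (ht : t + t ∈ lat τ)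
    (hz : ∀ x ∈ ({α, β, γ, δ} : Set ℂ), z - x ∉ lat τ ∧ z + t - x ∉ lat τ)
    (hden : (℘ (z - β) - ℘ (z - γ)) * (℘ (z - α) - ℘ (z - δ)) ≠ 0)
    (hden' : (℘ (z + t - β) - ℘ (z + t - γ)) * (℘ (z + t - α) - ℘ (z + t - δ)) ≠ 0) :
    hCross ℘ α β γ δ (z + t) = hCross ℘ α β γ δ z :=
  hCross_two_torsion_invariant_general τ hτ ℘ h℘ α β γ δ t z ht hz hden hden'
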